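/- arXiv:2410.15579 — 2 statements merged into one kernel-verified Lean document; each statement's English description precedes it below -/
import Mathlib

section
/- Let U ⊆ ℝⁿ be open and let G, G' : U → Matrix (Fin n) (Fin n) ℝ be continuously differentiable maps such that G(x) and G'(x) are symmetric positive definite for every x ∈ U. Then for every x ∈ U and all indices i, j, k: |Γ(G)^i_{jk}(x) − Γ(G')^i_{jk}(x)| ≤ (3/2) · [ ‖G(x)⁻¹ − G'(x)⁻¹‖_∞ · max_{l,m,s} |∂_s G_{lm}(x)| + ‖G'(x)⁻¹‖_∞ · max_{l,m,s} |∂_s G_{lm}(x) − ∂_s G'_{lm}(x)| ], where ‖A‖_∞ = max_i Σ_j |A_{ij}| is the maximum absolute row sum. -/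
open Matrix

/-- The partial derivative `∂_s G_{l m}` of a matrix-valued map on `ℝⁿ`. -/
noncomputable def matPartialDeriv {n : ℕ} (G : (Fin n → ℝ) → Matrix (Fin n) (Fin n) ℝ)
    (s l m : Fin n) (x : Fin n → ℝ) : ℝ :=
  fderiv ℝ (fun y => G y l m) x (Pi.single s 1)

/-- The Christoffel symbols `Γ(G)^i_{jk}(x) = (1/2) Σ_l (G(x)⁻¹)_{il}
(∂_k G_{lj}(x) + ∂_j G_{lk}(x) − ∂_l G_{jk}(x))` of the metric with coordinate matrix `G`. -/
noncomputable def christoffel {n : ℕ} (G : (Fin n → ℝ) → Matrix (Fin n) (Fin n) ℝ)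
    (i j k : Fin n) (x : Fin n → ℝ) : ℝ :=
  (1 / 2) * ∑ l, (G x)⁻¹ i l *
    (matPartialDeriv G k l j x + matPartialDeriv G j l k x - matPartialDeriv G l j k x)

/-- The maximum absolute row sum norm `‖A‖_∞ = max_i Σ_j |A_{ij}|`. -/
noncomputable def rowSumNorm {n : ℕ} (A : Matrix (Fin n) (Fin n) ℝ) : ℝ :=
  ⨆ i : Fin n, ∑ j, |A i j|

/-- For continuously differentiable symmetric-positive-definite matrix fields
`G, G'` on an open set `U ⊆ ℝⁿ`, the difference of Christoffel symbols satisfies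
`|Γ(G)^i_{jk}(x) − Γ(G')^i_{jk}(x)| ≤ (3/2)·[‖G(x)⁻¹ − G'(x)⁻¹‖_∞ · max_{l,m,s}|∂_s G_{lm}(x)|
 + ‖G'(x)⁻¹‖_∞ · max_{l,m,s}|∂_s G_{lm}(x) − ∂_s G'_{lm}(x)|]`. -/
theorem stmt_3 (n : ℕ) (U : Set (Fin n → ℝ)) (hU : IsOpen U)
    (G G' : (Fin n → ℝ) → Matrix (Fin n) (Fin n) ℝ)
    (hGdiff : ∀ l m : Fin n, ContDiffOn ℝ 1 (fun y => G y l m) U)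
    (hG'diff : ∀ l m : Fin n, ContDiffOn ℝ 1 (fun y => G' y l m) U)
    (hGpos : ∀ x ∈ U, (G x).PosDef) (hG'pos : ∀ x ∈ U, (G' x).PosDef) :
    ∀ x ∈ U, ∀ i j k : Fin n,
      |christoffel G i j k x - christoffel G' i j k x|
        ≤ (3 / 2) *
          (rowSumNorm ((G x)⁻¹ - (G' x)⁻¹) *
              (⨆ p : Fin n × Fin n × Fin n, |matPartialDeriv G p.2.2 p.1 p.2.1 x|)
            + rowSumNorm ((G' x)⁻¹) *
              (⨆ p : Fin n × Fin n × Fin n,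
                |matPartialDeriv G p.2.2 p.1 p.2.1 x - matPartialDeriv G' p.2.2 p.1 p.2.1 x|)) := by
  intro x hx i j k
  have hfin : ∀ (f : Fin n × Fin n × Fin n → ℝ), BddAbove (Set.range f) :=
    fun f => Set.Finite.bddAbove (Set.finite_range f)
  set A := (G x)⁻¹ with hA
  set A' := (G' x)⁻¹ with hA'
  set M := ⨆ p : Fin n × Fin n × Fin n, |matPartialDeriv G p.2.2 p.1 p.2.1 x| with hM
  set M' := ⨆ p : Fin n × Fin n × Fin n,
      |matPartialDeriv G p.2.2 p.1 p.2.1 x - matPartialDeriv G' p.2.2 p.1 p.2.1 x| with hM'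
  have hMle : ∀ s l m : Fin n, |matPartialDeriv G s l m x| ≤ M := by
    intro s l m
    rw [hM]
    exact le_ciSup (f := fun p : Fin n × Fin n × Fin n => |matPartialDeriv G p.2.2 p.1 p.2.1 x|)
      (hfin _) (l, m, s)
  have hM'le : ∀ s l m : Fin n,
      |matPartialDeriv G s l m x - matPartialDeriv G' s l m x| ≤ M' := by
    intro s l m
    rw [hM']
    exact le_ciSup (f := fun p : Fin n × Fin n × Fin n =>
      |matPartialDeriv G p.2.2 p.1 p.2.1 x - matPartialDeriv G' p.2.2 p.1 p.2.1 x|)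
      (hfin _) (l, m, s)
  have hM0 : 0 ≤ M := le_trans (abs_nonneg _) (hMle k i j)
  have hM'0 : 0 ≤ M' := le_trans (abs_nonneg _) (hM'le k i j)
  set D := fun l => matPartialDeriv G k l j x + matPartialDeriv G j l k x
      - matPartialDeriv G l j k x with hD
  set D' := fun l => matPartialDeriv G' k l j x + matPartialDeriv G' j l k x
      - matPartialDeriv G' l j k x with hD'
  have hDle : ∀ l, |D l| ≤ 3 * M := by
    intro l
    have h1 := abs_le.mp (hMle k l j)
    have h2 := abs_le.mp (hMle j l k)
    have h3 := abs_le.mp (hMle l j k)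
    rw [abs_le]
    constructor <;> simp only [hD] <;> linarith
  have hDD'le : ∀ l, |D l - D' l| ≤ 3 * M' := by
    intro l
    have h1 := abs_le.mp (hM'le k l j)
    have h2 := abs_le.mp (hM'le j l k)
    have h3 := abs_le.mp (hM'le l j k)
    rw [abs_le]
    constructor <;> simp only [hD, hD'] <;> linarith
  have hR1 : ∑ l, |(A - A') i l| ≤ rowSumNorm (A - A') := by
    rw [rowSumNorm]
    exact le_ciSup (f := fun i => ∑ j, |(A - A') i j|)
      (Set.Finite.bddAbove (Set.finite_range _)) i
  have hR2 : ∑ l, |A' i l| ≤ rowSumNorm A' := by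
    rw [rowSumNorm]
    exact le_ciSup (f := fun i => ∑ j, |A' i j|)
      (Set.Finite.bddAbove (Set.finite_range _)) i
  have hR10 : 0 ≤ rowSumNorm (A - A') :=
    le_trans (Finset.sum_nonneg fun _ _ => abs_nonneg _) hR1
  have hR20 : 0 ≤ rowSumNorm A' :=
    le_trans (Finset.sum_nonneg fun _ _ => abs_nonneg _) hR2
  have key : christoffel G i j k x - christoffel G' i j k x
      = (1 / 2) * ∑ l, ((A i l - A' i l) * D l + A' i l * (D l - D' l)) := by
    simp only [christoffel, ← hA, ← hA', ← hD, ← hD']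
    rw [← mul_sub, ← Finset.sum_sub_distrib]
    congr 1
    apply Finset.sum_congr rfl
    intros
    ring
  calc |christoffel G i j k x - christoffel G' i j k x|
      = (1 / 2) * |∑ l, ((A i l - A' i l) * D l + A' i l * (D l - D' l))| := by
        rw [key, abs_mul]
        norm_num
    _ ≤ (1 / 2) * ∑ l, |(A i l - A' i l) * D l + A' i l * (D l - D' l)| := by
        gcongr
        exact Finset.abs_sum_le_sum_abs _ _
    _ ≤ (1 / 2) * ∑ l, (|A i l - A' i l| * (3 * M) + |A' i l| * (3 * M')) := by
        gcongr with l _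
        calc |(A i l - A' i l) * D l + A' i l * (D l - D' l)|
            ≤ |(A i l - A' i l) * D l| + |A' i l * (D l - D' l)| := abs_add_le _ _
          _ ≤ |A i l - A' i l| * (3 * M) + |A' i l| * (3 * M') := by
              rw [abs_mul, abs_mul]
              gcongr
              · exact hDle l
              · exact hDD'le l
    _ = (3 / 2) * ((∑ l, |(A - A') i l|) * M + (∑ l, |A' i l|) * M') := by
        simp only [Matrix.sub_apply, Finset.sum_add_distrib, ← Finset.sum_mul]
        ring
    _ ≤ (3 / 2) * (rowSumNorm (A - A') * M + rowSumNorm A' * M') := by gcongr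
end

section
/- Let D = {(x,y) ∈ ℝ² : x² + y² < 1}, let G(x,y) = (1/(1 − x² − y²)) · !![1 − y², x·y; x·y, 1 − x²], and let a(x,y) = (−y/√(1 − x² − y²), −x·y²/((1 − y²)·√(1 − x² − y²))). Define b(x,y) = √(det G(x,y)) · (G(x,y)⁻¹ · a(x,y)). Then for every (x,y) ∈ D: b(x,y) = (−y/(1 − y²), 0), and consequently ∂b₁/∂x (x,y) + ∂b₂/∂y (x,y) = 0. -/
open Matrix

/-- The coordinate matrix of the spherical-cap metric. -/
noncomputable def capMetric (x y : ℝ) : Matrix (Fin 2) (Fin 2) ℝ :=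
  (1 / (1 - x ^ 2 - y ^ 2)) • !![1 - y ^ 2, x * y; x * y, 1 - x ^ 2]

/-- The components `a(x,y)` of the connection 1-form `α`. -/
noncomputable def capA (x y : ℝ) : Fin 2 → ℝ :=
  ![-y / Real.sqrt (1 - x ^ 2 - y ^ 2),
    -(x * y ^ 2) / ((1 - y ^ 2) * Real.sqrt (1 - x ^ 2 - y ^ 2))]

/-- `b(x,y) = √(det G(x,y)) · (G(x,y)⁻¹ · a(x,y))`, the coordinate vector of `⋆α`. -/
noncomputable def capB (x y : ℝ) : Fin 2 → ℝ :=
  Real.sqrt (capMetric x y).det • ((capMetric x y)⁻¹ *ᵥ capA x y)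

lemma capB_eq (x y : ℝ) (h : x ^ 2 + y ^ 2 < 1) :
    capB x y = ![-y / (1 - y ^ 2), 0] := by
  have hs : 0 < 1 - x ^ 2 - y ^ 2 := by nlinarith
  have hy : 0 < 1 - y ^ 2 := by nlinarith [sq_nonneg x]
  have hsne : (1 : ℝ) - x ^ 2 - y ^ 2 ≠ 0 := ne_of_gt hs
  have hss : Real.sqrt (1 - x ^ 2 - y ^ 2) * Real.sqrt (1 - x ^ 2 - y ^ 2)
      = 1 - x ^ 2 - y ^ 2 := Real.mul_self_sqrt hs.le
  have hrne : Real.sqrt (1 - x ^ 2 - y ^ 2) ≠ 0 :=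
    ne_of_gt (Real.sqrt_pos.mpr hs)
  have hinv : (capMetric x y)⁻¹ = !![1 - x ^ 2, -(x * y); -(x * y), 1 - y ^ 2] := by
    apply Matrix.inv_eq_right_inv
    ext i j
    fin_cases i <;> fin_cases j <;>
      simp [capMetric, Matrix.mul_apply, Fin.sum_univ_two] <;>
      field_simp <;> ring
  have hdet : (capMetric x y).det = 1 / (1 - x ^ 2 - y ^ 2) := by
    simp [capMetric, Matrix.det_fin_two, Matrix.smul_apply]
    field_simp
    ring
  have hsq : Real.sqrt ((capMetric x y).det) = 1 / Real.sqrt (1 - x ^ 2 - y ^ 2) := by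
    rw [hdet, one_div, one_div, Real.sqrt_inv]
  ext i
  fin_cases i
  · simp [capB, hsq, hinv, Matrix.mulVec, dotProduct, Fin.sum_univ_two, capA]
    field_simp
    linear_combination y * hss
  · simp [capB, hsq, hinv, Matrix.mulVec, dotProduct, Fin.sum_univ_two, capA]
    field_simp
    exact Or.inr (by ring)

/-- On `D = {x² + y² < 1}`, `b(x,y) = (−y/(1 − y²), 0)` and consequently
`∂b₁/∂x + ∂b₂/∂y = 0`, i.e. `d⋆α = 0` (`δα = 0`). -/
theorem stmt_13 (x y : ℝ) (h : x ^ 2 + y ^ 2 < 1) :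
    capB x y = ![-y / (1 - y ^ 2), 0] ∧
    deriv (fun x' => capB x' y 0) x + deriv (fun y' => capB x y' 1) y = 0 := by
  refine ⟨capB_eq x y h, ?_⟩
  have h1 : deriv (fun x' => capB x' y 0) x = 0 := by
    have hev : (fun x' => capB x' y 0) =ᶠ[nhds x] fun _ => -y / (1 - y ^ 2) := by
      have hc : ContinuousAt (fun x' : ℝ => x' ^ 2 + y ^ 2) x := by fun_prop
      filter_upwards [hc.eventually_lt continuousAt_const h] with x' hx'
      simp [capB_eq x' y hx']
    rw [hev.deriv_eq, deriv_const]
  have h2 : deriv (fun y' => capB x y' 1) y = 0 := by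
    have hev : (fun y' => capB x y' 1) =ᶠ[nhds y] fun _ => (0 : ℝ) := by
      have hc : ContinuousAt (fun y' : ℝ => x ^ 2 + y' ^ 2) y := by fun_prop
      filter_upwards [hc.eventually_lt continuousAt_const h] with y' hy'
      simp [capB_eq x y' hy']
    rw [hev.deriv_eq, deriv_const]
  rw [h1, h2, add_zero]
end
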